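/- Assume λ₀ ≠ κ₀ and set R₀ := (1/2)·min{λ₀, κ₀, |λ₀ − κ₀|}. For a nonzero integer n define f_n(z) := z³ − (λ₀+κ₀)z² + (λ₀κ₀ + (R²θ̄/c₀ + Rθ̄)/n²)·z − Rθ̄κ₀/n²; then for every nonzero integer n and every z ∈ ℂ, P_n(ū + inz) = 0 if and only if f_n(z) = 0. Moreover there exist N ∈ ℕ and C > 0 such that for every integer n with |n| ≥ N: f_n has exactly one root in each of the open balls B(0, R₀), B(λ₀, R₀) and B(κ₀, R₀); every root z of f_n with |z| < R₀ satisfies |z − Rθ̄/(λ₀n²)| ≤ C/n⁴; every root z of f_n with |z − λ₀| < R₀ satisfies |z − λ₀| ≤ C/n²; and every root z of f_n with |z − κ₀| < R₀ satisfies |z − κ₀| ≤ C/n². -/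

import Mathlib

/-!
Substituting `ν = ū + i n z` turns `P_n(ν)` into `(i n)³ f_n(z)`. Writing
`f_n(z) = z (z - λ₀) (z - κ₀) + (a z - b) / n²` with `a = R²θ̄/c₀ + Rθ̄` and `b = Rθ̄κ₀`, the
perturbation is `O(1/n²)` on bounded sets. Since `‖f_n(p)‖` is the product of the distances
from `p` to the three roots of `f_n`, for large `|n|` each of the pairwise disjoint balls of
radius `R₀` around `0, λ₀, κ₀` contains a root, hence exactly one. At a root in one ball the
distances to the two other centres are at least `R₀`, which gives the `O(1/n²)` bounds; near `0`
the identity `λ₀ κ₀ (z - Rθ̄/(λ₀ n²)) = -(a / n²) z - z² (z - λ₀ - κ₀)` upgrades this to `O(1/n⁴)`.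
-/

open Complex

/-- The characteristic cubic `P_n` of the matrix `R_n` arising from the non-barotropic
linearized compressible Navier–Stokes system. -/
noncomputable def Pcubic (lam kap u ρ θ R c : ℝ) (n : ℤ) (ν : ℂ) : ℂ :=
  ν ^ 3 - (((lam : ℂ) + (kap : ℂ)) * Complex.I * (n : ℂ) + 3 * (u : ℂ)) * ν ^ 2
    - ((lam : ℂ) * (kap : ℂ) * (n : ℂ) ^ 2
        - 2 * ((lam : ℂ) + (kap : ℂ)) * (u : ℂ) * Complex.I * (n : ℂ)
        - 3 * (u : ℂ) ^ 2 + (R : ℂ) ^ 2 * (θ : ℂ) / (c : ℂ) + (R : ℂ) * (θ : ℂ)) * ν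
    + (lam : ℂ) * (kap : ℂ) * (u : ℂ) * (n : ℂ) ^ 2
    - ((lam : ℂ) + (kap : ℂ)) * (u : ℂ) ^ 2 * Complex.I * (n : ℂ)
    - (u : ℂ) ^ 3 + (R : ℂ) ^ 2 * (θ : ℂ) / (c : ℂ) * (u : ℂ)
    + (R : ℂ) * (θ : ℂ) * (kap : ℂ) * Complex.I * (n : ℂ) + (R : ℂ) * (θ : ℂ) * (u : ℂ)

/-- The reduced cubic `f_n(z) = z³ − (λ₀+κ₀)z² + (λ₀κ₀ + (R²θ̄/c₀ + Rθ̄)/n²)z − Rθ̄κ₀/n²`. -/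
noncomputable def fcubic (lam kap θ R c : ℝ) (n : ℤ) (z : ℂ) : ℂ :=
  z ^ 3 - ((lam : ℂ) + (kap : ℂ)) * z ^ 2
    + ((lam : ℂ) * (kap : ℂ)
        + ((R : ℂ) ^ 2 * (θ : ℂ) / (c : ℂ) + (R : ℂ) * (θ : ℂ)) / (n : ℂ) ^ 2) * z
    - (R : ℂ) * (θ : ℂ) * (kap : ℂ) / (n : ℂ) ^ 2

open Polynomial Metric Function

namespace Polynomial

theorem exists_isRoot_dist_lt {K : Type*} [NormedField K] [IsAlgClosed K] {p : K[X]}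
    (hp : p.Monic) {z : K} {r : ℝ} (hr : 0 ≤ r) (h : ‖p.eval z‖ < r ^ p.natDegree) :
    ∃ w, p.IsRoot w ∧ dist w z < r := by
  by_contra! hfar
  have hsplit := IsAlgClosed.splits p
  have hprod : r ^ p.natDegree ≤ ‖p.eval z‖ := by
    rw [hsplit.eval_eq_prod_roots_of_monic hp, ← normHom_apply, map_multiset_prod,
      Multiset.map_map, hsplit.natDegree_eq_card_roots, ← Multiset.prod_replicate,
      ← Multiset.map_const']
    refine Multiset.prod_map_le_prod_map₀ _ _ (fun _ _ => hr) fun w hw => ?_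
    rw [comp_apply, normHom_apply, ← dist_eq_norm, dist_comm]
    exact hfar w ((mem_roots hp.ne_zero).1 hw)
  exact (h.trans_le hprod).false

theorem existsUnique_isRoot_mem {R : Type*} [CommRing R] [IsDomain R] {p : R[X]} (hp : p ≠ 0)
    {ι : Type*} [Fintype ι] (hdeg : p.natDegree ≤ Fintype.card ι) {S : ι → Set R}
    (hS : Pairwise (Disjoint on S)) (hroot : ∀ i, ∃ z ∈ S i, p.IsRoot z) (i : ι) :
    ∃! z, z ∈ S i ∧ p.IsRoot z := by
  classical
  choose w hwS hwroot using hroot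
  have hw : Injective w := fun i j hij => by
    by_contra hne
    exact Set.disjoint_left.1 (hS hne) (hwS i) (hij ▸ hwS j)
  -- `w` hits as many roots as `p` can have, so it hits all of them.
  have himage : Finset.univ.image w = p.roots.toFinset := by
    refine Finset.eq_of_subset_of_card_le (fun z hz => ?_) ?_
    · obtain ⟨j, -, rfl⟩ := Finset.mem_image.1 hz
      simpa [hp] using hwroot j
    · calc p.roots.toFinset.card ≤ Multiset.card p.roots := Multiset.toFinset_card_le _
        _ ≤ p.natDegree := card_roots' p
        _ ≤ Fintype.card ι := hdeg
        _ = (Finset.univ.image w).card := by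
          rw [Finset.card_image_of_injective _ hw, Finset.card_univ]
  refine ⟨w i, ⟨hwS i, hwroot i⟩, fun z ⟨hzS, hzroot⟩ => ?_⟩
  have hz : z ∈ Finset.univ.image w := himage ▸ by simpa [hp] using hzroot
  obtain ⟨j, -, rfl⟩ := Finset.mem_image.1 hz
  by_contra hji
  exact Set.disjoint_left.1 (hS fun hij => hji (congrArg w hij)) (hwS j) hzS

theorem existsUnique_isRoot_mem_ball {K : Type*} [NormedField K] [IsAlgClosed K] {p : K[X]}
    (hp : p.Monic) {ι : Type*} [Fintype ι] (hdeg : p.natDegree ≤ Fintype.card ι) {x : ι → K}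
    {r : ℝ} (hr : 0 ≤ r) (hx : Pairwise fun i j => 2 * r ≤ dist (x i) (x j))
    (hval : ∀ i, ‖p.eval (x i)‖ < r ^ p.natDegree) (i : ι) :
    ∃! z, z ∈ ball (x i) r ∧ p.IsRoot z :=
  existsUnique_isRoot_mem hp.ne_zero hdeg
    (fun _ _ hij => ball_disjoint_ball (by linarith [hx hij]))
    (fun i => (exists_isRoot_dist_lt hp hr (hval i)).imp fun _ hw => ⟨hw.2, hw.1⟩) i

end Polynomial

theorem dist_mul_pow_le_prod_dist {X ι : Type*} [PseudoMetricSpace X] [Fintype ι]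
    [DecidableEq ι] {x : ι → X} {r : ℝ} (hr : 0 ≤ r)
    (hx : Pairwise fun i j => 2 * r ≤ dist (x i) (x j)) {z : X} {i : ι} (hz : z ∈ ball (x i) r) :
    dist z (x i) * r ^ (Fintype.card ι - 1) ≤ ∏ j, dist z (x j) := by
  rw [← Finset.mul_prod_erase Finset.univ _ (Finset.mem_univ i), ← Finset.card_univ,
    ← Finset.card_erase_of_mem (Finset.mem_univ i), ← Finset.prod_const]
  refine mul_le_mul_of_nonneg_left (Finset.prod_le_prod (fun _ _ => hr) fun j hj => ?_)
    dist_nonneg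
  have hij := hx (Finset.ne_of_mem_erase hj).symm
  have := dist_triangle (x i) z (x j)
  rw [mem_ball, dist_comm] at hz
  linarith

theorem exists_nat_forall_le_abs_div_sq_lt (K : ℝ) {ε : ℝ} (hε : 0 < ε) :
    ∃ N : ℕ, ∀ n : ℤ, (N : ℤ) ≤ |n| → K / (n : ℝ) ^ 2 < ε := by
  obtain ⟨N, hN⟩ := exists_nat_gt (K / ε)
  refine ⟨N, fun n hn => ?_⟩
  rcases eq_or_ne n 0 with rfl | hn0
  · simpa using hε
  have h1 : (1 : ℝ) ≤ |(n : ℝ)| := by exact_mod_cast Int.one_le_abs hn0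
  have hNn : (N : ℝ) ≤ |(n : ℝ)| := by exact_mod_cast hn
  rw [div_lt_iff₀ hε] at hN
  rw [div_lt_iff₀ (by positivity), ← sq_abs]
  calc K < N * ε := hN
    _ ≤ ε * |(n : ℝ)| := by rw [mul_comm]; gcongr
    _ ≤ ε * |(n : ℝ)| ^ 2 := by gcongr; exact le_self_pow₀ h1 two_ne_zero

section ReducedCubic

variable {lam kap θ R c : ℝ}

theorem Pcubic_eq_mul_fcubic (u ρ : ℝ) {n : ℤ} (hn : n ≠ 0) (z : ℂ) :
    Pcubic lam kap u ρ θ R c n (u + I * n * z) = (I * n) ^ 3 * fcubic lam kap θ R c n z := by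
  have hn' : (n : ℂ) ≠ 0 := Int.cast_ne_zero.mpr hn
  unfold Pcubic fcubic
  generalize (R : ℂ) ^ 2 * θ / c = A
  field_simp
  linear_combination (-I * n * (z * (A + R * θ) - kap * R * θ + n ^ 2 * z * lam * kap)) * I_sq

theorem Pcubic_eq_zero_iff (u ρ : ℝ) {n : ℤ} (hn : n ≠ 0) (z : ℂ) :
    Pcubic lam kap u ρ θ R c n (u + I * n * z) = 0 ↔ fcubic lam kap θ R c n z = 0 := by
  rw [Pcubic_eq_mul_fcubic u ρ hn, mul_eq_zero, or_iff_right]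
  exact pow_ne_zero _ (mul_ne_zero I_ne_zero (Int.cast_ne_zero.mpr hn))

variable (lam kap θ R c) in
noncomputable def fcubicPoly (n : ℤ) : ℂ[X] :=
  X ^ 3 - C ((lam + kap : ℂ)) * X ^ 2 + C ((lam * kap + (R ^ 2 * θ / c + R * θ) / n ^ 2 : ℂ)) * X
    - C ((R * θ * kap / n ^ 2 : ℂ))

theorem eval_fcubicPoly (n : ℤ) (z : ℂ) :
    (fcubicPoly lam kap θ R c n).eval z = fcubic lam kap θ R c n z := by
  simp [fcubicPoly, fcubic]

theorem monic_fcubicPoly (n : ℤ) : (fcubicPoly lam kap θ R c n).Monic := by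
  unfold fcubicPoly; monicity!

theorem natDegree_fcubicPoly (n : ℤ) : (fcubicPoly lam kap θ R c n).natDegree = 3 := by
  unfold fcubicPoly; compute_degree!

variable (lam kap) in
def limitRoots : Fin 3 → ℂ := ![0, lam, kap]

theorem norm_limitRoots_le (i : Fin 3) : ‖limitRoots lam kap i‖ ≤ |lam| + |kap| := by
  fin_cases i <;> simp [limitRoots, add_nonneg]

theorem prod_dist_limitRoots (z : ℂ) :
    ∏ j, dist z (limitRoots lam kap j) = ‖z * (z - lam) * (z - kap)‖ := by
  simp [limitRoots, Fin.prod_univ_three, dist_eq_norm, mul_assoc]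

theorem pairwise_dist_limitRoots {r : ℝ} (hlam : 2 * r ≤ lam) (hkap : 2 * r ≤ kap)
    (hsep : 2 * r ≤ |lam - kap|) :
    Pairwise fun i j => 2 * r ≤ dist (limitRoots lam kap i) (limitRoots lam kap j) := by
  have hsep' : 2 * r ≤ |kap - lam| := abs_sub_comm lam kap ▸ hsep
  intro i j hij
  fin_cases i <;> fin_cases j <;> simp_all [limitRoots, dist_of_im_eq, Real.dist_eq] <;>
    linarith [le_abs_self lam, le_abs_self kap]

variable (lam kap θ R c) in
theorem exists_norm_fcubic_sub_le (s : ℝ) : ∃ K, ∀ (n : ℤ) (z : ℂ), ‖z‖ ≤ s →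
    ‖fcubic lam kap θ R c n z - z * (z - lam) * (z - kap)‖ ≤ K / (n : ℝ) ^ 2 := by
  refine ⟨|R ^ 2 * θ / c + R * θ| * s + |R * θ * kap|, fun n z hz => ?_⟩
  have hsub : fcubic lam kap θ R c n z - z * (z - lam) * (z - kap) =
      (((R ^ 2 * θ / c + R * θ : ℝ) : ℂ) * z - (R * θ * kap : ℝ)) / (n : ℂ) ^ 2 := by
    unfold fcubic; push_cast; ring
  rw [hsub, norm_div, norm_pow, norm_intCast, sq_abs]
  gcongr
  calc _ ≤ ‖((R ^ 2 * θ / c + R * θ : ℝ) : ℂ) * z‖ + ‖((R * θ * kap : ℝ) : ℂ)‖ := norm_sub_le _ _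
    _ ≤ _ := by
      rw [norm_mul, norm_real, norm_real, Real.norm_eq_abs, Real.norm_eq_abs]
      gcongr

theorem fcubic_eq_expansion_about_zero (hlam : lam ≠ 0) (n : ℤ) (z : ℂ) : fcubic lam kap θ R c n z =
    lam * kap * (z - (R * θ / (lam * (n : ℝ) ^ 2) : ℝ))
      + ((R ^ 2 * θ / c + R * θ : ℝ) / (n : ℂ) ^ 2) * z + z ^ 2 * (z - lam - kap) := by
  have hlam' : (lam : ℂ) ≠ 0 := ofReal_ne_zero.mpr hlam
  unfold fcubic
  push_cast
  linear_combination (R * θ * kap / (n : ℂ) ^ 2 : ℂ) * mul_inv_cancel₀ hlam'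

variable (θ R c)

theorem exists_existsUnique_root_mem_ball {r : ℝ} (hr : 0 < r)
    (hx : Pairwise fun i j => 2 * r ≤ dist (limitRoots lam kap i) (limitRoots lam kap j)) :
    ∃ N : ℕ, ∀ n : ℤ, (N : ℤ) ≤ |n| → ∀ i,
      ∃! z, z ∈ ball (limitRoots lam kap i) r ∧ fcubic lam kap θ R c n z = 0 := by
  obtain ⟨K, hK⟩ := exists_norm_fcubic_sub_le lam kap θ R c (|lam| + |kap|)
  obtain ⟨N, hN⟩ := exists_nat_forall_le_abs_div_sq_lt K (pow_pos hr 3)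
  refine ⟨N, fun n hn => ?_⟩
  have hval (j : Fin 3) :
      ‖(fcubicPoly lam kap θ R c n).eval (limitRoots lam kap j)‖ < r ^ 3 := by
    have hzero : limitRoots lam kap j * (limitRoots lam kap j - lam) *
        (limitRoots lam kap j - kap) = 0 := by
      rw [← norm_eq_zero, ← prod_dist_limitRoots]
      exact Finset.prod_eq_zero (Finset.mem_univ j) (dist_self _)
    simpa [eval_fcubicPoly, hzero] using (hK n _ (norm_limitRoots_le j)).trans_lt (hN n hn)
  simpa [eval_fcubicPoly] using existsUnique_isRoot_mem_ball (monic_fcubicPoly n)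
    (by simp [natDegree_fcubicPoly]) hr.le hx (by simpa [natDegree_fcubicPoly] using hval)

theorem exists_dist_limitRoots_le_of_root {r : ℝ} (hr : 0 < r)
    (hx : Pairwise fun i j => 2 * r ≤ dist (limitRoots lam kap i) (limitRoots lam kap j)) :
    ∃ C, ∀ (n : ℤ) (z : ℂ), fcubic lam kap θ R c n z = 0 → ∀ i,
      z ∈ ball (limitRoots lam kap i) r → dist z (limitRoots lam kap i) ≤ C / (n : ℝ) ^ 2 := by
  obtain ⟨K, hK⟩ := exists_norm_fcubic_sub_le lam kap θ R c (|lam| + |kap| + r)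
  refine ⟨K / r ^ 2, fun n z hz i hzi => ?_⟩
  have hnorm : ‖z‖ ≤ |lam| + |kap| + r :=
    calc ‖z‖ ≤ ‖limitRoots lam kap i‖ + dist z (limitRoots lam kap i) := by
          rw [dist_eq_norm]; exact norm_le_norm_add_norm_sub' _ _
      _ ≤ |lam| + |kap| + r := add_le_add (norm_limitRoots_le i) (mem_ball.1 hzi).le
  have hprod := dist_mul_pow_le_prod_dist hr.le hx hzi
  rw [prod_dist_limitRoots, ← norm_neg, ← zero_sub, ← hz, Fintype.card_fin] at hprod
  calc dist z (limitRoots lam kap i) ≤ K / (n : ℝ) ^ 2 / r ^ 2 :=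
        (le_div_iff₀ (by positivity)).2 (hprod.trans (hK n z hnorm))
    _ = K / r ^ 2 / (n : ℝ) ^ 2 := div_right_comm _ _ _

theorem exists_norm_sub_le_of_root_near_zero (hlam : lam ≠ 0) (hkap : kap ≠ 0) {r : ℝ}
    (hr : 0 < r)
    (hx : Pairwise fun i j => 2 * r ≤ dist (limitRoots lam kap i) (limitRoots lam kap j)) :
    ∃ C, ∀ (n : ℤ) (z : ℂ), fcubic lam kap θ R c n z = 0 → ‖z‖ < r →
      ‖z - ((R * θ / (lam * (n : ℝ) ^ 2) : ℝ) : ℂ)‖ ≤ C / (n : ℝ) ^ 4 := by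
  obtain ⟨C₁, hC₁⟩ := exists_dist_limitRoots_le_of_root θ R c hr hx
  refine ⟨(|R ^ 2 * θ / c + R * θ| * C₁ + C₁ ^ 2 * (r + |lam| + |kap|)) / |lam * kap|,
    fun n z hz hzr => ?_⟩
  have hz₁ : ‖z‖ ≤ C₁ / (n : ℝ) ^ 2 := by
    simpa [limitRoots] using hC₁ n z hz 0 (by simpa [limitRoots] using hzr)
  rw [fcubic_eq_expansion_about_zero hlam, add_assoc, add_eq_zero_iff_eq_neg'] at hz
  set A := R ^ 2 * θ / c + R * θ
  set s := r + |lam| + |kap|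
  have hs : ‖z - lam - kap‖ ≤ s := by
    calc ‖z - lam - kap‖ ≤ ‖z - lam‖ + ‖(kap : ℂ)‖ := norm_sub_le _ _
      _ ≤ ‖z‖ + ‖(lam : ℂ)‖ + ‖(kap : ℂ)‖ := by gcongr; exact norm_sub_le _ _
      _ ≤ s := by simp only [norm_real, Real.norm_eq_abs]; linarith
  rw [div_right_comm, le_div_iff₀' (abs_pos.2 (mul_ne_zero hlam hkap))]
  calc |lam * kap| * ‖z - ((R * θ / (lam * (n : ℝ) ^ 2) : ℝ) : ℂ)‖
      = ‖(A : ℂ) / (n : ℂ) ^ 2 * z + z ^ 2 * (z - lam - kap)‖ := by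
        rw [hz, norm_neg, norm_mul, ← ofReal_mul, norm_real, Real.norm_eq_abs]
    _ ≤ |A| / (n : ℝ) ^ 2 * ‖z‖ + ‖z‖ ^ 2 * s := by
        refine (norm_add_le _ _).trans ?_
        rw [norm_mul, norm_mul, norm_div, norm_pow, norm_pow, norm_real, Real.norm_eq_abs,
          norm_intCast, sq_abs]
        gcongr
    _ ≤ |A| / (n : ℝ) ^ 2 * (C₁ / (n : ℝ) ^ 2) + (C₁ / (n : ℝ) ^ 2) ^ 2 * s := by gcongr
    _ = (|A| * C₁ + C₁ ^ 2 * s) / (n : ℝ) ^ 4 := by ring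

end ReducedCubic

theorem roots_of_reduced_cubic_general (lam kap u ρ θ R c : ℝ) (hlam : 0 < lam) (hkap : 0 < kap)
    (hne : lam ≠ kap) :
    (∀ n : ℤ, n ≠ 0 → ∀ z : ℂ,
      Pcubic lam kap u ρ θ R c n ((u : ℂ) + Complex.I * (n : ℂ) * z) = 0 ↔
        fcubic lam kap θ R c n z = 0) ∧
    ∃ N : ℕ, ∃ C > 0, ∀ n : ℤ, (N : ℤ) ≤ |n| →
      (∃! z : ℂ, ‖z‖ < min (min lam kap) |lam - kap| / 2 ∧
        fcubic lam kap θ R c n z = 0) ∧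
      (∃! z : ℂ, ‖z - (lam : ℂ)‖ < min (min lam kap) |lam - kap| / 2 ∧
        fcubic lam kap θ R c n z = 0) ∧
      (∃! z : ℂ, ‖z - (kap : ℂ)‖ < min (min lam kap) |lam - kap| / 2 ∧
        fcubic lam kap θ R c n z = 0) ∧
      (∀ z : ℂ, ‖z‖ < min (min lam kap) |lam - kap| / 2 →
        fcubic lam kap θ R c n z = 0 →
        ‖z - ((R * θ / (lam * (n : ℝ) ^ 2) : ℝ) : ℂ)‖ ≤ C / (n : ℝ) ^ 4) ∧
      (∀ z : ℂ, ‖z - (lam : ℂ)‖ < min (min lam kap) |lam - kap| / 2 →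
        fcubic lam kap θ R c n z = 0 →
        ‖z - (lam : ℂ)‖ ≤ C / (n : ℝ) ^ 2) ∧
      (∀ z : ℂ, ‖z - (kap : ℂ)‖ < min (min lam kap) |lam - kap| / 2 →
        fcubic lam kap θ R c n z = 0 →
        ‖z - (kap : ℂ)‖ ≤ C / (n : ℝ) ^ 2) := by
  refine ⟨fun n hn z => Pcubic_eq_zero_iff u ρ hn z, ?_⟩
  set r := min (min lam kap) |lam - kap| / 2 with hr_def
  have h2r : 2 * r = min (min lam kap) |lam - kap| := by rw [hr_def]; ring
  have hr : 0 < r := by have := abs_pos.2 (sub_ne_zero.2 hne); positivity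
  have hx := pairwise_dist_limitRoots (h2r ▸ (min_le_left _ _).trans (min_le_left _ _))
    (h2r ▸ (min_le_left _ _).trans (min_le_right _ _)) (h2r ▸ min_le_right _ _)
  obtain ⟨N, hN⟩ := exists_existsUnique_root_mem_ball θ R c hr hx
  obtain ⟨C₁, hC₁⟩ := exists_dist_limitRoots_le_of_root θ R c hr hx
  obtain ⟨C₀, hC₀⟩ := exists_norm_sub_le_of_root_near_zero θ R c hlam.ne' hkap.ne' hr hx
  set C := max 1 (max C₀ C₁)
  refine ⟨N, C, lt_max_of_lt_left one_pos, fun n hn => ?_⟩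
  have hC₀C : C₀ / (n : ℝ) ^ 4 ≤ C / (n : ℝ) ^ 4 := by
    gcongr; exact le_max_of_le_right (le_max_left _ _)
  have hC₁C : C₁ / (n : ℝ) ^ 2 ≤ C / (n : ℝ) ^ 2 := by
    gcongr; exact le_max_of_le_right (le_max_right _ _)
  refine ⟨by simpa [limitRoots] using hN n hn 0,
    by simpa [limitRoots, dist_eq_norm] using hN n hn 1,
    by simpa [limitRoots, dist_eq_norm] using hN n hn 2,
    fun z hz hfz => (hC₀ n z hfz hz).trans hC₀C, fun z hz hfz => ?_, fun z hz hfz => ?_⟩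
  · have := hC₁ n z hfz 1 (by simpa [limitRoots, dist_eq_norm] using hz)
    simpa [limitRoots, dist_eq_norm] using this.trans hC₁C
  · have := hC₁ n z hfz 2 (by simpa [limitRoots, dist_eq_norm] using hz)
    simpa [limitRoots, dist_eq_norm] using this.trans hC₁C

/-- With `R₀ = (1/2)min{λ₀, κ₀, |λ₀ − κ₀|}`: for every nonzero `n`,
`P_n(ū + inz) = 0 ↔ f_n(z) = 0`; and for `|n|` large, `f_n` has exactly one root in each
of the balls `B(0,R₀)`, `B(λ₀,R₀)`, `B(κ₀,R₀)`, the root in `B(0,R₀)` is within `C/n⁴`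
of `Rθ̄/(λ₀n²)` and the roots in `B(λ₀,R₀)`, `B(κ₀,R₀)` are within `C/n²` of `λ₀`, `κ₀`. -/
theorem roots_of_reduced_cubic (lam kap u ρ θ R c : ℝ) (hlam : 0 < lam) (hkap : 0 < kap)
    (hu : 0 < u) (hρ : 0 < ρ) (hθ : 0 < θ) (hR : 0 < R) (hc : 0 < c) (hne : lam ≠ kap) :
    (∀ n : ℤ, n ≠ 0 → ∀ z : ℂ,
      Pcubic lam kap u ρ θ R c n ((u : ℂ) + Complex.I * (n : ℂ) * z) = 0 ↔
        fcubic lam kap θ R c n z = 0) ∧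
    ∃ N : ℕ, ∃ C > 0, ∀ n : ℤ, (N : ℤ) ≤ |n| →
      (∃! z : ℂ, ‖z‖ < min (min lam kap) |lam - kap| / 2 ∧
        fcubic lam kap θ R c n z = 0) ∧
      (∃! z : ℂ, ‖z - (lam : ℂ)‖ < min (min lam kap) |lam - kap| / 2 ∧
        fcubic lam kap θ R c n z = 0) ∧
      (∃! z : ℂ, ‖z - (kap : ℂ)‖ < min (min lam kap) |lam - kap| / 2 ∧
        fcubic lam kap θ R c n z = 0) ∧
      (∀ z : ℂ, ‖z‖ < min (min lam kap) |lam - kap| / 2 →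
        fcubic lam kap θ R c n z = 0 →
        ‖z - ((R * θ / (lam * (n : ℝ) ^ 2) : ℝ) : ℂ)‖ ≤ C / (n : ℝ) ^ 4) ∧
      (∀ z : ℂ, ‖z - (lam : ℂ)‖ < min (min lam kap) |lam - kap| / 2 →
        fcubic lam kap θ R c n z = 0 →
        ‖z - (lam : ℂ)‖ ≤ C / (n : ℝ) ^ 2) ∧
      (∀ z : ℂ, ‖z - (kap : ℂ)‖ < min (min lam kap) |lam - kap| / 2 →
        fcubic lam kap θ R c n z = 0 →
        ‖z - (kap : ℂ)‖ ≤ C / (n : ℝ) ^ 2) :=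
  roots_of_reduced_cubic_general lam kap u ρ θ R c hlam hkap hne
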